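/- arXiv:2309.04101 — 2 statements merged into one kernel-verified Lean document; each statement's English description precedes it below -/
import Mathlib

section
/- Let n ≥ 6 and let Γ' be a signed graph of order n that attains the maximum largest eigenvalue λ1 among all unbalanced, negative-C4-free signed graphs of order n, and suppose A(Γ') has a nonnegative unit eigenvector corresponding to λ1(Γ'). Then the underlying graph of Γ' is connected. -/
open scoped BigOperators

/-- A signed graph on the vertex set `Fin n`: a simple graph together with a
symmetric `±1` sign on each edge. -/
structure SignedGraph (n : ℕ) where
  G : SimpleGraph (Fin n)
  sign : Fin n → Fin n → ℤ
  sign_symm : ∀ i j, sign i j = sign j i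
  sign_pm : ∀ i j, G.Adj i j → sign i j = 1 ∨ sign i j = -1

namespace SignedGraph

variable {n : ℕ}

open Classical in
/-- The adjacency matrix of a signed graph, as a real matrix. -/
noncomputable def adjMatrix (Γ : SignedGraph n) : Matrix (Fin n) (Fin n) ℝ :=
  fun i j => if Γ.G.Adj i j then (Γ.sign i j : ℝ) else 0

/-- The largest eigenvalue (the index) of a signed graph. -/
noncomputable def lambda1 (Γ : SignedGraph n) : ℝ :=
  sSup (spectrum ℝ Γ.adjMatrix)

/-- The sign of an unordered edge. -/
def signEdge (Γ : SignedGraph n) : Sym2 (Fin n) → ℤ :=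
  Sym2.lift ⟨Γ.sign, Γ.sign_symm⟩

/-- The sign of a walk: the product of the signs of its edges. -/
def walkSign (Γ : SignedGraph n) {u v : Fin n} (w : Γ.G.Walk u v) : ℤ :=
  (w.edges.map Γ.signEdge).prod

/-- A negative cycle: a cycle whose sign is `-1`
(equivalently, with an odd number of negative edges). -/
def IsNegCycle (Γ : SignedGraph n) {u : Fin n} (c : Γ.G.Walk u u) : Prop :=
  c.IsCycle ∧ Γ.walkSign c = -1

/-- A signed graph is unbalanced if it contains a negative cycle. -/
def Unbalanced (Γ : SignedGraph n) : Prop :=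
  ∃ (u : Fin n) (c : Γ.G.Walk u u), Γ.IsNegCycle c

/-- A signed graph is negative-`C₄`-free if it contains no negative 4-cycle. -/
def NegC4Free (Γ : SignedGraph n) : Prop :=
  ∀ (u : Fin n) (c : Γ.G.Walk u u), c.IsCycle → c.length = 4 → Γ.walkSign c ≠ -1

end SignedGraph

/-- The signed graph `Γ₁`: vertices `2,…,n-1` induce an all-positive complete
graph, vertices `0` and `1` are joined to each other by a negative edge and to
vertex `2` by positive edges, and have no other neighbours. -/
def Gamma1 (n : ℕ) : SignedGraph n where
  G :=
    { Adj := fun i j => i ≠ j ∧ (2 ≤ min i.val j.val ∨ max i.val j.val ≤ 2)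
      symm := by
        constructor
        intro i j h
        refine ⟨Ne.symm h.1, ?_⟩
        rw [min_comm, max_comm]
        exact h.2
      loopless := by constructor; intro i h; exact h.1 rfl }
  sign := fun i j =>
    if (i.val = 0 ∧ j.val = 1) ∨ (i.val = 1 ∧ j.val = 0) then -1 else 1
  sign_symm := by
    intro i j
    try dsimp only
    by_cases h : (i.val = 0 ∧ j.val = 1) ∨ (i.val = 1 ∧ j.val = 0)
    · rw [if_pos h, if_pos (by tauto)]
    · rw [if_neg h, if_neg (by tauto)]
  sign_pm := by
    intro i j _
    try dsimp only
    by_cases h : (i.val = 0 ∧ j.val = 1) ∨ (i.val = 1 ∧ j.val = 0)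
    · rw [if_pos h]; right; rfl
    · rw [if_neg h]; left; rfl

/-- The signed graph `Γ₂`: vertices `4,…,n-1` induce an all-positive complete
graph, vertices `2` and `3` are joined by positive edges to all of `4,…,n-1`
(but not to each other), vertices `0` and `1` are joined to each other by a
negative edge and to `2` and `3` by positive edges, and have no other
neighbours. -/
def Gamma2 (n : ℕ) : SignedGraph n where
  G :=
    { Adj := fun i j => i ≠ j ∧
        ((i.val ≤ 1 ∧ j.val ≤ 3) ∨ (j.val ≤ 1 ∧ i.val ≤ 3) ∨
         (2 ≤ i.val ∧ i.val ≤ 3 ∧ 4 ≤ j.val) ∨ (2 ≤ j.val ∧ j.val ≤ 3 ∧ 4 ≤ i.val) ∨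
         (4 ≤ i.val ∧ 4 ≤ j.val))
      symm := by
        constructor
        intro i j h
        exact ⟨Ne.symm h.1, by tauto⟩
      loopless := by constructor; intro i h; exact h.1 rfl }
  sign := fun i j =>
    if (i.val = 0 ∧ j.val = 1) ∨ (i.val = 1 ∧ j.val = 0) then -1 else 1
  sign_symm := by
    intro i j
    try dsimp only
    by_cases h : (i.val = 0 ∧ j.val = 1) ∨ (i.val = 1 ∧ j.val = 0)
    · rw [if_pos h, if_pos (by tauto)]
    · rw [if_neg h, if_neg (by tauto)]
  sign_pm := by
    intro i j _
    try dsimp only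
    by_cases h : (i.val = 0 ∧ j.val = 1) ∨ (i.val = 1 ∧ j.val = 0)
    · rw [if_pos h]; right; rfl
    · rw [if_neg h]; left; rfl


/-- The all-negative complete signed graph `(K_n, -)`. -/
def NegKn (n : ℕ) : SignedGraph n where
  G := ⊤
  sign := fun _ _ => -1
  sign_symm := fun _ _ => rfl
  sign_pm := fun _ _ _ => Or.inr rfl

/-- `Γ` is switching equivalent to `Γ'` (up to a relabelling of the vertices):
there is a bijection of the vertices matching the underlying graphs and a
`±1`-valued switching function `s` relating the two sign functions. -/
def SwitchingEquiv {n : ℕ} (Γ Γ' : SignedGraph n) : Prop :=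
  ∃ e : Fin n ≃ Fin n, ∃ s : Fin n → ℤ, (∀ i, s i = 1 ∨ s i = -1) ∧
    (∀ i j, Γ.G.Adj i j ↔ Γ'.G.Adj (e i) (e j)) ∧
    (∀ i j, Γ.G.Adj i j → Γ.sign i j = s i * Γ'.sign (e i) (e j) * s j)


/-!
If the underlying graph were disconnected, pick `u` with `x u > 0` and `v` in another
component, and join them by a positive edge. The new edge is a bridge, so it lies on no cycle:
the new signed graph is still unbalanced and negative-`C₄`-free. Its adjacency matrix is
`A + E_uv + E_vu`, and the test vector `x + ε e_v` has Rayleigh quotient strictly above `λ₁`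
for small `ε > 0`, contradicting the maximality of `λ₁(Γ')`.
-/

open Matrix

theorem Matrix.IsHermitian.dotProduct_mulVec_le_sSup_spectrum {m : Type*} [Fintype m]
    [DecidableEq m] {A : Matrix m m ℝ} (hA : A.IsHermitian) (y : m → ℝ) :
    y ⬝ᵥ A *ᵥ y ≤ sSup (spectrum ℝ A) * (y ⬝ᵥ y) := by
  set μ := sSup (spectrum ℝ A)
  have hpsd : (algebraMap ℝ _ μ - A).PosSemidef := by
    refine posSemidef_iff_isHermitian_and_spectrum_nonneg.mpr ⟨?_, ?_⟩
    · exact (isHermitian_diagonal_of_self_adjoint _ (by ext; simp)).sub hA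
    · rw [← spectrum.singleton_sub_eq]
      rintro _ ⟨_, rfl, a, ha, rfl⟩
      exact sub_nonneg.mpr (le_csSup A.finite_spectrum.bddAbove ha)
  have hq := hpsd.dotProduct_mulVec_nonneg y
  rw [star_trivial, sub_mulVec, dotProduct_sub, Algebra.algebraMap_eq_smul_one, smul_mulVec,
    one_mulVec, dotProduct_smul, smul_eq_mul] at hq
  linarith

theorem Matrix.IsHermitian.lt_sSup_spectrum_add_single_add_single {m : Type*} [Fintype m]
    [DecidableEq m] {A : Matrix m m ℝ} (hA : A.IsHermitian) {μ : ℝ} {x : m → ℝ}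
    (hx : A *ᵥ x = μ • x) {u v : m} (huv : u ≠ v) (hu : 0 < x u) (hv : 0 ≤ x v)
    (hvv : A v v = 0) :
    μ < sSup (spectrum ℝ (A + single u v 1 + single v u 1)) := by
  set ε := x u / (|μ| + 1)
  have hε : 0 < ε := by positivity
  have hμε : μ * ε < x u := by
    have : (|μ| + 1) * ε = x u := mul_div_cancel₀ _ (by positivity)
    nlinarith [le_abs_self μ]
  -- `x` alone only gives `μ + 2 x u x v`, no gain when `x v = 0`; shifting weight `ε` onto `v`
  -- gains `2 ε x u` at a cost of `μ ε²`.
  set e : m → ℝ := Pi.single v 1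
  have hxA : x ᵥ* A = μ • x := by
    rw [← mulVec_transpose, ← conjTranspose_eq_transpose_of_trivial, hA, hx]
  have hxe : x ⬝ᵥ e = x v := dotProduct_single_one x v
  have hex : e ⬝ᵥ x = x v := single_one_dotProduct v x
  have hee : e ⬝ᵥ e = 1 := by simp [e]
  have heAe : e ⬝ᵥ A *ᵥ e = 0 := by simp [e, hvv]
  set y := x + ε • e
  have hyy : y ⬝ᵥ y = x ⬝ᵥ x + 2 * ε * x v + ε ^ 2 := by
    simp only [y, dotProduct_add, add_dotProduct, dotProduct_smul, smul_dotProduct, hxe, hex,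
      hee, smul_eq_mul]
    ring
  have hyAy : y ⬝ᵥ A *ᵥ y = μ * (x ⬝ᵥ x) + 2 * ε * μ * x v := by
    simp only [y, mulVec_add, mulVec_smul, dotProduct_add, add_dotProduct, dotProduct_smul,
      smul_dotProduct, hx, dotProduct_mulVec x A e, hxA, hxe, hex, heAe, smul_eq_mul]
    ring
  have hyBy : y ⬝ᵥ (A + single u v 1 + single v u 1) *ᵥ y =
      y ⬝ᵥ A *ᵥ y + 2 * x u * (x v + ε) := by
    have hyu : y u = x u := by simp [y, e, huv]
    have hyv : y v = x v + ε := by simp [y, e]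
    simp only [add_mulVec, dotProduct_add, single_mulVec_eq, dotProduct_smul,
      dotProduct_single_one, smul_eq_mul, hyu, hyv]
    ring
  have hB : (A + single u v 1 + single v u 1).IsHermitian := by
    simp only [IsHermitian, conjTranspose_add, conjTranspose_single, star_one, hA.eq]
    abel
  have hpos : 0 < y ⬝ᵥ y := by
    have hxx : 0 ≤ x ⬝ᵥ x := by simpa using dotProduct_self_star_nonneg x
    rw [hyy]; nlinarith [mul_pos hε hε, mul_nonneg hε.le hv]
  refine lt_of_mul_lt_mul_right ?_ hpos.le
  calc μ * (y ⬝ᵥ y) < y ⬝ᵥ (A + single u v 1 + single v u 1) *ᵥ y := by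
        rw [hyBy, hyAy, hyy]; nlinarith [mul_pos hu hε]
    _ ≤ _ := hB.dotProduct_mulVec_le_sSup_spectrum y

namespace SignedGraph

variable {n : ℕ}

lemma adjMatrix_isHermitian (Γ : SignedGraph n) : Γ.adjMatrix.IsHermitian := by
  ext i j
  simp only [conjTranspose_apply, star_trivial, adjMatrix]
  rw [Γ.G.adj_comm, Γ.sign_symm]

lemma adjMatrix_apply_self (Γ : SignedGraph n) (i : Fin n) : Γ.adjMatrix i i = 0 := by
  simp [adjMatrix]

lemma walkSign_transfer {Γ Γ' : SignedGraph n} {a b : Fin n} (c : Γ.G.Walk a b)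
    (h : ∀ e ∈ c.edges, e ∈ Γ'.G.edgeSet)
    (hsign : ∀ e ∈ c.edges, Γ'.signEdge e = Γ.signEdge e) :
    Γ'.walkSign (c.transfer Γ'.G h) = Γ.walkSign c := by
  rw [walkSign, walkSign, SimpleGraph.Walk.edges_transfer, List.map_congr_left hsign]

open Classical in
noncomputable def addEdge (Γ : SignedGraph n) (u v : Fin n) : SignedGraph n where
  G := Γ.G ⊔ SimpleGraph.edge u v
  sign i j := if Γ.G.Adj i j then Γ.sign i j else 1
  sign_symm i j := by simp only [Γ.G.adj_comm i j, Γ.sign_symm i j]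
  sign_pm i j _ := by split_ifs with h; exacts [Γ.sign_pm i j h, Or.inl rfl]

variable {Γ : SignedGraph n} {u v : Fin n}

lemma le_addEdge : Γ.G ≤ (Γ.addEdge u v).G := le_sup_left

lemma signEdge_addEdge {e : Sym2 (Fin n)} (he : e ∈ Γ.G.edgeSet) :
    (Γ.addEdge u v).signEdge e = Γ.signEdge e := by
  induction e using Sym2.ind with
  | _ i j => simp_all [signEdge, addEdge]

lemma Unbalanced.addEdge (h : Γ.Unbalanced) (u v : Fin n) : (Γ.addEdge u v).Unbalanced := by
  obtain ⟨a, c, hc, hsign⟩ := h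
  have hsub e (he : e ∈ c.edges) := c.edges_subset_edgeSet he
  exact ⟨a, c.transfer _ fun e he ↦ SimpleGraph.edgeSet_mono le_addEdge (hsub e he),
    hc.transfer _, (walkSign_transfer c _ fun e he ↦ signEdge_addEdge (hsub e he)).trans hsign⟩

lemma exists_isCycle_of_addEdge_of_not_reachable (huv : ¬ Γ.G.Reachable u v) {a : Fin n}
    {c : (Γ.addEdge u v).G.Walk a a} (hc : c.IsCycle) :
    ∃ c' : Γ.G.Walk a a, c'.IsCycle ∧ c'.length = c.length ∧
      Γ.walkSign c' = (Γ.addEdge u v).walkSign c := by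
  have hbridge : (Γ.addEdge u v).G.IsBridge s(u, v) :=
    SimpleGraph.isBridge_sup_edge.mpr (SimpleGraph.IsBridge.of_not_reachable huv)
  have hmem : ∀ e ∈ c.edges, e ∈ Γ.G.edgeSet := by
    intro e he
    have := c.edges_subset_edgeSet he
    simp only [addEdge, SimpleGraph.edgeSet_sup, SimpleGraph.edgeSet_edge] at this
    rcases this with h | ⟨rfl, -⟩
    · exact h
    · exact absurd he (hbridge.notMem_edges_of_isCycle hc)
  exact ⟨c.transfer _ hmem, hc.transfer _, c.length_transfer _,
    walkSign_transfer c hmem fun e he ↦ (signEdge_addEdge (hmem e he)).symm⟩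

lemma NegC4Free.addEdge_of_not_reachable (h : Γ.NegC4Free) (huv : ¬ Γ.G.Reachable u v) :
    (Γ.addEdge u v).NegC4Free := by
  intro a c hc hlen
  obtain ⟨c', hc', hlen', hsign⟩ := exists_isCycle_of_addEdge_of_not_reachable huv hc
  exact hsign ▸ h a c' hc' (hlen'.trans hlen)

lemma adjMatrix_addEdge (huv : u ≠ v) (hadj : ¬ Γ.G.Adj u v) :
    (Γ.addEdge u v).adjMatrix = Γ.adjMatrix + single u v 1 + single v u 1 := by
  ext i j
  by_cases h : Γ.G.Adj i j
  · have hij : ¬ (u = i ∧ v = j) := by rintro ⟨rfl, rfl⟩; exact hadj h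
    have hji : ¬ (v = i ∧ u = j) := by rintro ⟨rfl, rfl⟩; exact hadj h.symm
    simp [adjMatrix, addEdge, h, hij, hji]
  · simp only [adjMatrix, addEdge, SimpleGraph.sup_adj, SimpleGraph.edge_adj, h,
      Matrix.add_apply, single_apply]
    grind

end SignedGraph

open SignedGraph in
theorem extremal_connected_general (n : ℕ) (Γ' : SignedGraph n)
    (hub : Γ'.Unbalanced) (hfree : Γ'.NegC4Free)
    (hmax : ∀ Γ : SignedGraph n, Γ.Unbalanced → Γ.NegC4Free → Γ.lambda1 ≤ Γ'.lambda1)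
    (x : Fin n → ℝ) (hx : Γ'.adjMatrix.mulVec x = Γ'.lambda1 • x)
    (hnn : ∀ i, 0 ≤ x i) (hunit : ∑ i, x i ^ 2 = 1) :
    Γ'.G.Connected := by
  obtain ⟨u, hu⟩ : ∃ u, 0 < x u := by
    by_contra! h
    simp [le_antisymm (h _) (hnn _)] at hunit
  rw [SimpleGraph.connected_iff_exists_forall_reachable]
  refine ⟨u, fun v ↦ ?_⟩
  by_contra huv
  have hne : u ≠ v := fun h ↦ huv (h ▸ .rfl)
  have hlt := Γ'.adjMatrix_isHermitian.lt_sSup_spectrum_add_single_add_single hx hne hu (hnn v)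
    (Γ'.adjMatrix_apply_self v)
  rw [← adjMatrix_addEdge hne fun h ↦ huv h.reachable] at hlt
  exact hlt.not_ge (hmax _ (hub.addEdge u v) (hfree.addEdge_of_not_reachable huv))

theorem extremal_connected (n : ℕ) (hn : 6 ≤ n) (Γ' : SignedGraph n)
    (hub : Γ'.Unbalanced) (hfree : Γ'.NegC4Free)
    (hmax : ∀ Γ : SignedGraph n, Γ.Unbalanced → Γ.NegC4Free → Γ.lambda1 ≤ Γ'.lambda1)
    (x : Fin n → ℝ) (hx : Γ'.adjMatrix.mulVec x = Γ'.lambda1 • x)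
    (hnn : ∀ i, 0 ≤ x i) (hunit : ∑ i, x i ^ 2 = 1) :
    Γ'.G.Connected :=
  extremal_connected_general n Γ' hub hfree hmax x hx hnn hunit
end

section
/- Let n ≥ 6 and let Γ' be a signed graph of order n that attains the maximum largest eigenvalue λ1 among all unbalanced, negative-C4-free signed graphs of order n, let x be a nonnegative unit eigenvector of A(Γ') corresponding to λ1(Γ'), and suppose Γ' has exactly one negative edge v1v2. Then the coordinate x_i of x is strictly positive for every vertex v_i ∉ {v1, v2}. -/
open scoped BigOperators

/-!
Suppose `x i = 0` for a vertex `i ∉ {a, b}`. All edges at `i` are positive, so the eigenvalue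
equation at `i` forces `x` to vanish on the neighbours of `i`. Join `i` by a positive edge to a
vertex `u ∉ {a, b}` with `x u > 0`. Only row and column `i` of the adjacency matrix change, so
still `xᵀ A x = λ₁(Γ')`, while now `(A x) i ≥ x u > 0`; pushing `x` slightly in the direction `e_i`
raises the Rayleigh quotient above `λ₁(Γ')`. A negative 4-cycle of the new graph would have to
contain both the new edge and `ab`, so it is excluded by choosing `u` well (read off the eigenvalue
equations at `a` and `b`), or, in the one case where `i u b a` would close up, by deleting the edge
`ia` too; the negative triangle `a b u` then keeps the graph unbalanced. This contradicts the
extremality of `Γ'`.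
-/

open SimpleGraph Matrix Finset

section Rayleigh

variable {ι : Type*} [Fintype ι] [DecidableEq ι]

theorem Matrix.IsHermitian.dotProduct_mulVec_le_sSup_spectrum_s13 {B : Matrix ι ι ℝ}
    (hB : B.IsHermitian) (y : ι → ℝ) :
    y ⬝ᵥ B *ᵥ y ≤ sSup (spectrum ℝ B) * (y ⬝ᵥ y) := by
  set M := sSup (spectrum ℝ B)
  have hM : (algebraMap ℝ (Matrix ι ι ℝ) M - B).PosSemidef := by
    refine posSemidef_iff_isHermitian_and_spectrum_nonneg.mpr ⟨?_, ?_⟩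
    · exact (isHermitian_diagonal_of_self_adjoint _ (by ext; simp)).sub hB
    · rw [← spectrum.singleton_sub_eq]
      rintro _ ⟨_, rfl, μ, hμ, rfl⟩
      exact sub_nonneg.mpr (le_csSup B.finite_real_spectrum.bddAbove hμ)
  have := hM.dotProduct_mulVec_nonneg y
  rw [Algebra.algebraMap_eq_smul_one, sub_mulVec, smul_mulVec, one_mulVec, star_trivial,
    dotProduct_sub, dotProduct_smul, smul_eq_mul] at this
  linarith

theorem Matrix.IsHermitian.lt_sSup_spectrum_of_eq_off {A B : Matrix ι ι ℝ} (hB : B.IsHermitian)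
    {x : ι → ℝ} {μ : ℝ} (hx : A *ᵥ x = μ • x) (hx1 : x ⬝ᵥ x = 1) {i : ι} (hxi : x i = 0)
    (hoff : ∀ j k, j ≠ i → k ≠ i → B j k = A j k) (hBii : B i i = 0)
    (hpos : 0 < (B *ᵥ x) i) : μ < sSup (spectrum ℝ B) := by
  set c := (B *ᵥ x) i
  have hxBx : x ⬝ᵥ B *ᵥ x = μ := by
    have hterm : ∀ j k, x j * (B j k * x k) = x j * (A j k * x k) := by
      intro j k
      by_cases hj : j = i
      · simp [hj, hxi]
      by_cases hk : k = i
      · simp [hk, hxi]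
      rw [hoff j k hj hk]
    calc x ⬝ᵥ B *ᵥ x = x ⬝ᵥ A *ᵥ x := by
          simp only [dotProduct, mulVec, Finset.mul_sum, hterm]
      _ = μ := by rw [hx, dotProduct_smul, hx1, smul_eq_mul, mul_one]
  set e : ι → ℝ := Pi.single i 1
  have hxBe : x ⬝ᵥ B *ᵥ e = c := by
    rw [dotProduct_mulVec, ← mulVec_transpose, ← conjTranspose_eq_transpose_of_trivial, hB.eq,
      dotProduct_single_one]
  have heBx : e ⬝ᵥ B *ᵥ x = c := single_one_dotProduct _ _
  have heBe : e ⬝ᵥ B *ᵥ e = 0 := by rw [single_one_dotProduct, mulVec_single_one, col_apply, hBii]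
  have hxe : x ⬝ᵥ e = 0 := by rw [dotProduct_single_one, hxi]
  have hee : e ⬝ᵥ e = 1 := by simp [e]
  -- `x + t e` has Rayleigh quotient `(μ + 2tc) / (1 + t²)`, which exceeds `μ` for small `t > 0`
  set t := c / (|μ| + 1)
  have ht : 0 < t := by positivity
  have hyBy : (x + t • e) ⬝ᵥ B *ᵥ (x + t • e) = μ + 2 * t * c := by
    simp only [mulVec_add, mulVec_smul, dotProduct_add, add_dotProduct, dotProduct_smul,
      smul_dotProduct, hxBx, hxBe, heBx, heBe, smul_eq_mul]
    ring
  have hyy : (x + t • e) ⬝ᵥ (x + t • e) = 1 + t ^ 2 := by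
    simp only [dotProduct_add, add_dotProduct, dotProduct_smul, smul_dotProduct, hx1, hxe,
      dotProduct_comm e x, hee, smul_eq_mul]
    ring
  have hμt : μ * t < 2 * c := by
    calc μ * t ≤ |μ| * t := by gcongr; exact le_abs_self μ
      _ < (|μ| + 1) * t := by linarith
      _ = c := by simp only [t]; field_simp
      _ < 2 * c := by linarith
  by_contra! hle
  have := hB.dotProduct_mulVec_le_sSup_spectrum_s13 (x + t • e)
  rw [hyBy, hyy] at this
  nlinarith [mul_le_mul_of_nonneg_right hle (by positivity : (0:ℝ) ≤ 1 + t ^ 2)]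

end Rayleigh

theorem SimpleGraph.Walk.adj_or_adj_of_length_eq_four {V : Type*} {G : SimpleGraph V} {v : V}
    (c : G.Walk v v) (hc : c.length = 4) {i u a b : V} (hia : i ≠ a) (hib : i ≠ b)
    (hua : u ≠ a) (hub : u ≠ b) (hiu : s(i, u) ∈ c.edges) (hab : s(a, b) ∈ c.edges) :
    (G.Adj u a ∧ G.Adj i b) ∨ (G.Adj u b ∧ G.Adj i a) := by
  match c, hc with
  | .cons h₁ (.cons h₂ (.cons h₃ (.cons h₄ .nil))), _ =>
    simp only [Walk.edges_cons, Walk.edges_nil, List.mem_cons, List.not_mem_nil, or_false,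
      Sym2.eq_iff] at hiu hab
    have := h₁.symm; have := h₂.symm; have := h₃.symm; have := h₄.symm
    rcases hiu with (⟨rfl, rfl⟩ | ⟨rfl, rfl⟩) | (⟨rfl, rfl⟩ | ⟨rfl, rfl⟩) |
      (⟨rfl, rfl⟩ | ⟨rfl, rfl⟩) | (⟨rfl, rfl⟩ | ⟨rfl, rfl⟩) <;>
    rcases hab with (⟨rfl, rfl⟩ | ⟨rfl, rfl⟩) | (⟨rfl, rfl⟩ | ⟨rfl, rfl⟩) |
      (⟨rfl, rfl⟩ | ⟨rfl, rfl⟩) | (⟨rfl, rfl⟩ | ⟨rfl, rfl⟩) <;>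
    simp_all

namespace SignedGraph

variable {n : ℕ}

def PositiveOff (Γ : SignedGraph n) (e : Sym2 (Fin n)) : Prop :=
  ∀ j k, Γ.G.Adj j k → s(j, k) ≠ e → Γ.sign j k = 1

structure IsExtremal (Γ : SignedGraph n) : Prop where
  unbalanced : Γ.Unbalanced
  negC4Free : Γ.NegC4Free
  lambda1_le : ∀ Γ₂ : SignedGraph n, Γ₂.Unbalanced → Γ₂.NegC4Free → Γ₂.lambda1 ≤ Γ.lambda1

structure IsNonnegUnitEigenvector (Γ : SignedGraph n) (x : Fin n → ℝ) : Prop where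
  mulVec_eq : Γ.adjMatrix *ᵥ x = Γ.lambda1 • x
  nonneg : ∀ i, 0 ≤ x i
  sum_sq : ∑ i, x i ^ 2 = 1

lemma positiveOff_of_forall_neg {Γ : SignedGraph n} {a b : Fin n}
    (h : ∀ j k, Γ.G.Adj j k → Γ.sign j k = -1 → s(j, k) = s(a, b)) : Γ.PositiveOff s(a, b) :=
  fun j k hjk hne => (Γ.sign_pm j k hjk).resolve_right fun hneg => hne (h j k hjk hneg)

lemma IsNonnegUnitEigenvector.dotProduct_self {Γ : SignedGraph n} {x : Fin n → ℝ}
    (hx : Γ.IsNonnegUnitEigenvector x) : x ⬝ᵥ x = 1 := by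
  simpa only [dotProduct, sq] using hx.sum_sq

lemma IsNonnegUnitEigenvector.exists_pos {Γ : SignedGraph n} {x : Fin n → ℝ}
    (hx : Γ.IsNonnegUnitEigenvector x) : ∃ u, 0 < x u := by
  by_contra! h
  have hzero : ∀ u, x u = 0 := fun u => (h u).antisymm (hx.nonneg u)
  simpa [hzero] using hx.sum_sq

section adjMatrix

open scoped Classical

variable (Γ : SignedGraph n)

lemma adjMatrix_of_adj {j k : Fin n} (h : Γ.G.Adj j k) : Γ.adjMatrix j k = Γ.sign j k :=
  if_pos h

lemma adjMatrix_self (i : Fin n) : Γ.adjMatrix i i = 0 :=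
  if_neg (Γ.G.loopless.irrefl i)

lemma adjMatrix_isHermitian_s13 : Γ.adjMatrix.IsHermitian := by
  ext j k
  simp only [conjTranspose_apply, star_trivial, adjMatrix, Γ.G.adj_comm, Γ.sign_symm]

lemma adjMatrix_mulVec_apply (x : Fin n → ℝ) (j : Fin n) :
    (Γ.adjMatrix *ᵥ x) j = ∑ k ∈ Γ.G.neighborFinset j, Γ.sign j k * x k := by
  simp only [mulVec, dotProduct, adjMatrix, ite_mul, zero_mul, neighborFinset_eq_filter,
    sum_filter]

lemma dotProduct_adjMatrix_mulVec_le (y : Fin n → ℝ) :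
    y ⬝ᵥ Γ.adjMatrix *ᵥ y ≤ Γ.lambda1 * (y ⬝ᵥ y) :=
  Γ.adjMatrix_isHermitian_s13.dotProduct_mulVec_le_sSup_spectrum_s13 y

lemma one_le_lambda1 {j k : Fin n} (h : Γ.G.Adj j k) : 1 ≤ Γ.lambda1 := by
  set s : ℝ := (Γ.sign j k : ℝ)
  set z : Fin n → ℝ := Pi.single j 1 + s • Pi.single k 1
  have hs : s ^ 2 = 1 := by rcases Γ.sign_pm j k h with hσ | hσ <;> simp [s, hσ]
  have hzAz : z ⬝ᵥ Γ.adjMatrix *ᵥ z = 2 := by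
    simp only [z, mulVec_add, mulVec_smul, dotProduct_add, add_dotProduct, dotProduct_smul,
      smul_dotProduct, mulVec_single_one, single_one_dotProduct, col_apply, adjMatrix_self,
      Γ.adjMatrix_of_adj h, Γ.adjMatrix_of_adj h.symm, Γ.sign_symm k j, smul_eq_mul]
    linear_combination 2 * hs
  have hzz : z ⬝ᵥ z = 2 := by
    simp only [z, dotProduct_add, add_dotProduct, dotProduct_smul, smul_dotProduct,
      single_one_dotProduct, Pi.single_eq_same, Pi.single_eq_of_ne h.ne,
      Pi.single_eq_of_ne h.ne', smul_eq_mul]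
    linear_combination hs
  have := Γ.dotProduct_adjMatrix_mulVec_le z
  rw [hzAz, hzz] at this
  linarith

variable {Γ} {a b : Fin n} {x : Fin n → ℝ} {μ : ℝ}

lemma sum_neighborFinset_eq (hpos : Γ.PositiveOff s(a, b)) (hx : Γ.adjMatrix *ᵥ x = μ • x)
    {j : Fin n} (hja : j ≠ a) (hjb : j ≠ b) : ∑ k ∈ Γ.G.neighborFinset j, x k = μ * x j := by
  rw [← smul_eq_mul, ← Pi.smul_apply, ← hx, adjMatrix_mulVec_apply]
  refine sum_congr rfl fun k hk => ?_
  rw [hpos j k ((Γ.G.mem_neighborFinset j k).mp hk) (by simp [hja, hjb]), Int.cast_one, one_mul]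

lemma sum_neighborFinset_erase_eq (hpos : Γ.PositiveOff s(a, b))
    (hx : Γ.adjMatrix *ᵥ x = μ • x) (hab : Γ.G.Adj a b) (hneg : Γ.sign a b = -1) :
    ∑ k ∈ (Γ.G.neighborFinset a).erase b, x k = μ * x a + x b := by
  have hrow := congrFun hx a
  rw [adjMatrix_mulVec_apply, ← add_sum_erase _ _ ((Γ.G.mem_neighborFinset a b).mpr hab),
    hneg] at hrow
  have hrest : ∑ k ∈ (Γ.G.neighborFinset a).erase b, Γ.sign a k * x k
      = ∑ k ∈ (Γ.G.neighborFinset a).erase b, x k := by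
    refine sum_congr rfl fun k hk => ?_
    obtain ⟨hkb, hk⟩ := mem_erase.mp hk
    rw [hpos a k ((Γ.G.mem_neighborFinset a k).mp hk) (by simp [hkb, hab.ne]), Int.cast_one,
      one_mul]
  rw [hrest, Pi.smul_apply, smul_eq_mul] at hrow
  push_cast at hrow
  linarith

lemma eq_zero_of_adj (hpos : Γ.PositiveOff s(a, b)) (hx : Γ.adjMatrix *ᵥ x = μ • x)
    (hnn : ∀ k, 0 ≤ x k) {j : Fin n} (hja : j ≠ a) (hjb : j ≠ b) (hxj : x j = 0) ⦃k : Fin n⦄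
    (hjk : Γ.G.Adj j k) : x k = 0 := by
  have hsum := sum_neighborFinset_eq hpos hx hja hjb
  rw [hxj, mul_zero, sum_eq_zero_iff_of_nonneg fun k _ => hnn k] at hsum
  exact hsum k ((Γ.G.mem_neighborFinset j k).mpr hjk)

lemma eq_zero_of_adj_endpoint (hpos : Γ.PositiveOff s(a, b)) (hx : Γ.adjMatrix *ᵥ x = μ • x)
    (hnn : ∀ k, 0 ≤ x k) (hab : Γ.G.Adj a b) (hneg : Γ.sign a b = -1) (hxa : x a = 0)
    (hxb : x b = 0) ⦃k : Fin n⦄ (hak : Γ.G.Adj a k) : x k = 0 := by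
  obtain rfl | hkb := eq_or_ne k b
  · exact hxb
  have hsum := sum_neighborFinset_erase_eq hpos hx hab hneg
  rw [hxa, hxb, mul_zero, add_zero, sum_eq_zero_iff_of_nonneg fun k _ => hnn k] at hsum
  exact hsum k (mem_erase.mpr ⟨hkb, (Γ.G.mem_neighborFinset a k).mpr hak⟩)

lemma exists_adj_pos_of_endpoint (hpos : Γ.PositiveOff s(a, b))
    (hx : Γ.adjMatrix *ᵥ x = μ • x) (hnn : ∀ k, 0 ≤ x k) (hab : Γ.G.Adj a b)
    (hneg : Γ.sign a b = -1) (h : 0 < μ * x a + x b) : ∃ p, Γ.G.Adj a p ∧ p ≠ b ∧ 0 < x p := by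
  rw [← sum_neighborFinset_erase_eq hpos hx hab hneg,
    sum_pos_iff_of_nonneg fun k _ => hnn k] at h
  obtain ⟨p, hp, hxp⟩ := h
  obtain ⟨hpb, hp⟩ := mem_erase.mp hp
  exact ⟨p, (Γ.G.mem_neighborFinset a p).mp hp, hpb, hxp⟩

end adjMatrix

lemma lambda1_lt_lambda1_of_eq_off {Γ Γ₀ : SignedGraph n} {x : Fin n → ℝ}
    (hx : Γ₀.IsNonnegUnitEigenvector x) {i u : Fin n} (hxi : x i = 0) (hxu : 0 < x u)
    (hoff : ∀ j k, j ≠ i → k ≠ i → Γ.adjMatrix j k = Γ₀.adjMatrix j k)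
    (hrow : ∀ k, Γ.G.Adj i k → Γ.sign i k = 1) (hiu : Γ.G.Adj i u) :
    Γ₀.lambda1 < Γ.lambda1 := by
  classical
  refine Γ.adjMatrix_isHermitian_s13.lt_sSup_spectrum_of_eq_off hx.mulVec_eq hx.dotProduct_self hxi
    hoff (Γ.adjMatrix_self i) ?_
  have hterm : ∀ k ∈ Γ.G.neighborFinset i, Γ.sign i k * x k = x k := fun k hk => by
    rw [hrow k ((Γ.G.mem_neighborFinset i k).mp hk), Int.cast_one, one_mul]
  rw [adjMatrix_mulVec_apply, sum_congr rfl hterm]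
  exact (sum_pos_iff_of_nonneg fun k _ => hx.nonneg k).mpr
    ⟨u, (Γ.G.mem_neighborFinset i u).mpr hiu, hxu⟩

lemma IsNegCycle.exists_transfer {Γ Γ₂ : SignedGraph n} {v : Fin n} {c : Γ.G.Walk v v}
    (hc : Γ.IsNegCycle c)
    (h : ∀ j k, s(j, k) ∈ c.edges → Γ₂.G.Adj j k ∧ Γ₂.sign j k = Γ.sign j k) :
    ∃ c₂ : Γ₂.G.Walk v v, Γ₂.IsNegCycle c₂ ∧ c₂.length = c.length := by
  have hE : ∀ e ∈ c.edges, e ∈ Γ₂.G.edgeSet := fun e he => by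
    induction e using Sym2.ind with | _ j k => exact (h j k he).1
  refine ⟨c.transfer Γ₂.G hE, ⟨hc.1.transfer hE, ?_⟩, c.length_transfer hE⟩
  rw [← hc.2, walkSign, walkSign, Walk.edges_transfer]
  refine congrArg List.prod (List.map_congr_left fun e he => ?_)
  induction e using Sym2.ind with | _ j k => exact (h j k he).2

lemma exists_neg_edge_of_walkSign {Γ : SignedGraph n} {u v : Fin n} {c : Γ.G.Walk u v}
    (h : Γ.walkSign c = -1) : ∃ j k, s(j, k) ∈ c.edges ∧ Γ.sign j k = -1 := by
  by_contra! hpos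
  have hone : ∀ σ ∈ c.edges.map Γ.signEdge, σ = 1 := by
    simp only [List.mem_map]
    rintro _ ⟨e, he, rfl⟩
    induction e using Sym2.ind with
    | _ j k => exact (Γ.sign_pm j k (c.adj_of_mem_edges he)).resolve_right (hpos j k he)
  rw [walkSign, List.prod_eq_one hone] at h
  exact absurd h (by decide)

lemma unbalanced_of_triangle {Γ : SignedGraph n} {a b p : Fin n} (hab : Γ.G.Adj a b)
    (hbp : Γ.G.Adj b p) (hpa : Γ.G.Adj p a)
    (hsign : Γ.sign a b * Γ.sign b p * Γ.sign p a = -1) : Γ.Unbalanced := by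
  refine ⟨a, .cons hab (.cons hbp (.cons hpa .nil)), ?_, ?_⟩
  · simp [Walk.cons_isCycle_iff, hab.ne, hbp.ne, hpa.ne, hab.ne', hpa.ne']
  · simpa [walkSign, signEdge, mul_assoc] using hsign

lemma negC4Free_of_new_pos_edge {Γ Γ₀ : SignedGraph n} {a b i u : Fin n}
    (hfree : Γ₀.NegC4Free) (hpos : Γ₀.PositiveOff s(a, b))
    (hsub : ∀ j k, Γ.G.Adj j k → s(j, k) ≠ s(i, u) → Γ₀.G.Adj j k ∧ Γ₀.sign j k = Γ.sign j k)
    (hsign : Γ.sign i u = 1) (hia : i ≠ a) (hib : i ≠ b) (hua : u ≠ a) (hub : u ≠ b)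
    (hsafe₁ : ¬(Γ.G.Adj u a ∧ Γ.G.Adj i b)) (hsafe₂ : ¬(Γ.G.Adj u b ∧ Γ.G.Adj i a)) :
    Γ.NegC4Free := by
  intro v c hc hlen hneg
  by_cases hiu : s(i, u) ∈ c.edges
  · obtain ⟨j, k, hjk, hsjk⟩ := exists_neg_edge_of_walkSign hneg
    have hne : s(j, k) ≠ s(i, u) := fun he => by
      have : Γ.sign j k = Γ.sign i u := congrArg Γ.signEdge he
      rw [hsjk, hsign] at this
      exact absurd this (by decide)
    obtain ⟨hadj, hsign₀⟩ := hsub j k (c.adj_of_mem_edges hjk) hne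
    have hab : s(j, k) = s(a, b) := by
      by_contra h
      have := hpos j k hadj h
      omega
    rw [hab] at hjk
    rcases c.adj_or_adj_of_length_eq_four hlen hia hib hua hub hiu hjk with h | h
    exacts [hsafe₁ h, hsafe₂ h]
  · obtain ⟨c₀, hc₀, hlen₀⟩ := IsNegCycle.exists_transfer (Γ₂ := Γ₀) ⟨hc, hneg⟩
      fun j k hjk => hsub j k (c.adj_of_mem_edges hjk) fun he => hiu (he ▸ hjk)
    exact hfree v c₀ hc₀.1 (hlen₀.trans hlen) hc₀.2

def addPosEdge (Γ : SignedGraph n) (i u : Fin n) : SignedGraph n where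
  G := Γ.G ⊔ edge i u
  sign j k := if s(j, k) = s(i, u) then 1 else Γ.sign j k
  sign_symm j k := by rw [Sym2.eq_swap, Γ.sign_symm]
  sign_pm j k h := by
    split_ifs with he
    · exact .inl rfl
    · refine Γ.sign_pm j k (h.resolve_right fun h' => he ?_)
      rw [edge_adj] at h'
      rw [Sym2.eq_iff]
      tauto

def deleteEdge (Γ : SignedGraph n) (i a : Fin n) : SignedGraph n where
  G := Γ.G.deleteEdges {s(i, a)}
  sign := Γ.sign
  sign_symm := Γ.sign_symm
  sign_pm j k h := Γ.sign_pm j k (deleteEdges_adj.mp h).1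

section Modifications

variable (Γ : SignedGraph n) {i u j k : Fin n}

lemma addPosEdge_adj_self (h : i ≠ u) : (Γ.addPosEdge i u).G.Adj i u :=
  .inr ((edge_adj ..).mpr ⟨.inl ⟨rfl, rfl⟩, h⟩)

lemma addPosEdge_sign_self : (Γ.addPosEdge i u).sign i u = 1 := if_pos rfl

lemma addPosEdge_adj_of_ne (h : s(j, k) ≠ s(i, u)) :
    (Γ.addPosEdge i u).G.Adj j k ↔ Γ.G.Adj j k := by
  refine ⟨fun h' => h'.resolve_right fun he => h ?_, .inl⟩
  rw [edge_adj] at he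
  rw [Sym2.eq_iff]
  tauto

lemma addPosEdge_sign_of_ne (h : s(j, k) ≠ s(i, u)) :
    (Γ.addPosEdge i u).sign j k = Γ.sign j k := if_neg h

open scoped Classical in
lemma adjMatrix_addPosEdge_of_ne (h : s(j, k) ≠ s(i, u)) :
    (Γ.addPosEdge i u).adjMatrix j k = Γ.adjMatrix j k := by
  simp only [adjMatrix, Γ.addPosEdge_adj_of_ne h, Γ.addPosEdge_sign_of_ne h]

lemma deleteEdge_not_adj : ¬(Γ.deleteEdge i u).G.Adj i u :=
  fun h => (deleteEdges_adj.mp h).2 rfl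

lemma deleteEdge_adj_of_ne (h : s(j, k) ≠ s(i, u)) :
    (Γ.deleteEdge i u).G.Adj j k ↔ Γ.G.Adj j k := by
  simp [deleteEdge, deleteEdges_adj, h]

lemma adj_of_deleteEdge_adj (h : (Γ.deleteEdge i u).G.Adj j k) : Γ.G.Adj j k :=
  (deleteEdges_adj.mp h).1

open scoped Classical in
lemma adjMatrix_deleteEdge_of_ne (h : s(j, k) ≠ s(i, u)) :
    (Γ.deleteEdge i u).adjMatrix j k = Γ.adjMatrix j k := by
  simp only [adjMatrix, Γ.deleteEdge_adj_of_ne h]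
  rfl

end Modifications

section Extremal

variable {Γ' : SignedGraph n} {x : Fin n → ℝ} {a b i u : Fin n}

lemma IsExtremal.false_of_new_pos_edge (hΓ' : Γ'.IsExtremal)
    (hx : Γ'.IsNonnegUnitEigenvector x) (hpos : Γ'.PositiveOff s(a, b)) (hia : i ≠ a)
    (hib : i ≠ b) (hua : u ≠ a) (hub : u ≠ b) (hxi : x i = 0) (hxu : 0 < x u)
    (Γ : SignedGraph n) (hoff : ∀ j k, j ≠ i → k ≠ i → Γ.adjMatrix j k = Γ'.adjMatrix j k)
    (hsub : ∀ j k, Γ.G.Adj j k → s(j, k) ≠ s(i, u) → Γ'.G.Adj j k ∧ Γ'.sign j k = Γ.sign j k)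
    (hiu : Γ.G.Adj i u) (hsign : Γ.sign i u = 1) (hunb : Γ.Unbalanced)
    (hsafe₁ : ¬(Γ.G.Adj u a ∧ Γ.G.Adj i b)) (hsafe₂ : ¬(Γ.G.Adj u b ∧ Γ.G.Adj i a)) : False := by
  have hrow : ∀ k, Γ.G.Adj i k → Γ.sign i k = 1 := by
    intro k hk
    by_cases hku : s(i, k) = s(i, u)
    · exact (congrArg Γ.signEdge hku).trans hsign
    · obtain ⟨hk', hs⟩ := hsub i k hk hku
      rw [← hs]
      exact hpos i k hk' (by simp [hia, hib])
  have hfree := negC4Free_of_new_pos_edge hΓ'.negC4Free hpos hsub hsign hia hib hua hub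
    hsafe₁ hsafe₂
  exact (hΓ'.lambda1_le Γ hunb hfree).not_gt
    (lambda1_lt_lambda1_of_eq_off hx hxi hxu hoff hrow hiu)

lemma IsExtremal.false_of_addPosEdge (hΓ' : Γ'.IsExtremal) (hx : Γ'.IsNonnegUnitEigenvector x)
    (hpos : Γ'.PositiveOff s(a, b)) (hia : i ≠ a) (hib : i ≠ b) (hua : u ≠ a) (hub : u ≠ b)
    (hxi : x i = 0) (hxu : 0 < x u) (hnadj : ¬Γ'.G.Adj i u)
    (hsafe₁ : ¬(Γ'.G.Adj u a ∧ Γ'.G.Adj i b)) (hsafe₂ : ¬(Γ'.G.Adj u b ∧ Γ'.G.Adj i a)) :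
    False := by
  have hiu : i ≠ u := by rintro rfl; linarith
  have hadj : ∀ {j k}, s(j, k) ≠ s(i, u) → ((Γ'.addPosEdge i u).G.Adj j k ↔ Γ'.G.Adj j k) :=
    Γ'.addPosEdge_adj_of_ne
  refine hΓ'.false_of_new_pos_edge hx hpos hia hib hua hub hxi hxu (Γ'.addPosEdge i u)
    (fun j k hj hk => Γ'.adjMatrix_addPosEdge_of_ne (by simp [hj, hk]))
    (fun j k hjk hne => ⟨(hadj hne).mp hjk, (Γ'.addPosEdge_sign_of_ne hne).symm⟩)
    (Γ'.addPosEdge_adj_self hiu) Γ'.addPosEdge_sign_self ?_ ?_ ?_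
  · obtain ⟨v, c, hc⟩ := hΓ'.unbalanced
    obtain ⟨c', hc', -⟩ := hc.exists_transfer fun j k hjk => by
      have hne : s(j, k) ≠ s(i, u) := fun he => hnadj <| by
        rw [← Γ'.G.mem_edgeSet, ← he]; exact c.edges_subset_edgeSet hjk
      exact ⟨(hadj hne).mpr (c.adj_of_mem_edges hjk), Γ'.addPosEdge_sign_of_ne hne⟩
    exact ⟨v, c', hc'⟩
  · rwa [hadj (by grind [Sym2.eq_iff]), hadj (by grind [Sym2.eq_iff])]
  · rwa [hadj (by grind [Sym2.eq_iff]), hadj (by grind [Sym2.eq_iff])]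

lemma IsExtremal.false_of_replaceEdge (hΓ' : Γ'.IsExtremal)
    (hx : Γ'.IsNonnegUnitEigenvector x) (hpos : Γ'.PositiveOff s(a, b)) (hab : Γ'.G.Adj a b)
    (hneg : Γ'.sign a b = -1) (hia : i ≠ a) (hib : i ≠ b) (hua : u ≠ a) (hub : u ≠ b)
    (hxi : x i = 0) (hxu : 0 < x u) (hadj_ua : Γ'.G.Adj u a) (hadj_ub : Γ'.G.Adj u b)
    (hnib : ¬Γ'.G.Adj i b) : False := by
  have hiu : i ≠ u := by rintro rfl; linarith
  have hba : b ≠ a := hab.ne'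
  set Γ := (Γ'.deleteEdge i a).addPosEdge i u
  have hadj : ∀ {j k}, s(j, k) ≠ s(i, u) → s(j, k) ≠ s(i, a) → (Γ.G.Adj j k ↔ Γ'.G.Adj j k) :=
    fun hu ha => (addPosEdge_adj_of_ne _ hu).trans (Γ'.deleteEdge_adj_of_ne ha)
  have hsign : ∀ {j k}, s(j, k) ≠ s(i, u) → Γ.sign j k = Γ'.sign j k :=
    addPosEdge_sign_of_ne _
  refine hΓ'.false_of_new_pos_edge hx hpos hia hib hua hub hxi hxu Γ
    (fun j k hj hk => by
      rw [adjMatrix_addPosEdge_of_ne _ (by grind [Sym2.eq_iff]),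
        adjMatrix_deleteEdge_of_ne _ (by grind [Sym2.eq_iff])])
    (fun j k hjk hne =>
      ⟨Γ'.adj_of_deleteEdge_adj ((addPosEdge_adj_of_ne _ hne).mp hjk), (hsign hne).symm⟩)
    (addPosEdge_adj_self _ hiu) (addPosEdge_sign_self _) ?_ ?_ ?_
  · refine unbalanced_of_triangle ((hadj ?_ ?_).mpr hab) ((hadj ?_ ?_).mpr hadj_ub.symm)
      ((hadj ?_ ?_).mpr hadj_ua) ?_
    all_goals try grind [Sym2.eq_iff]
    rw [hsign (by grind [Sym2.eq_iff]), hsign (by grind [Sym2.eq_iff]),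
      hsign (by grind [Sym2.eq_iff]), hneg, hpos b u hadj_ub.symm (by grind [Sym2.eq_iff]),
      hpos u a hadj_ua (by grind [Sym2.eq_iff])]
    rfl
  · exact fun h => hnib ((hadj (by grind [Sym2.eq_iff]) (by grind [Sym2.eq_iff])).mp h.2)
  · exact fun h => Γ'.deleteEdge_not_adj ((addPosEdge_adj_of_ne _ (by grind [Sym2.eq_iff])).mp h.2)

lemma IsExtremal.false_of_endpoints_eq_zero (hΓ' : Γ'.IsExtremal)
    (hx : Γ'.IsNonnegUnitEigenvector x) (hpos : Γ'.PositiveOff s(a, b)) (hab : Γ'.G.Adj a b)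
    (hneg : Γ'.sign a b = -1) (hia : i ≠ a) (hib : i ≠ b) (hxi : x i = 0) (hxa : x a = 0)
    (hxb : x b = 0) : False := by
  obtain ⟨u, hxu⟩ := hx.exists_pos
  have hzero_a := eq_zero_of_adj_endpoint hpos hx.mulVec_eq hx.nonneg hab hneg hxa hxb
  have hzero_b := eq_zero_of_adj_endpoint (by rwa [Sym2.eq_swap]) hx.mulVec_eq hx.nonneg hab.symm
    (by rwa [Γ'.sign_symm]) hxb hxa
  have hzero_i := eq_zero_of_adj hpos hx.mulVec_eq hx.nonneg hia hib hxi
  refine hΓ'.false_of_addPosEdge hx hpos hia hib (by rintro rfl; linarith)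
    (by rintro rfl; linarith) hxi hxu (fun h => ?_) (fun h => ?_) (fun h => ?_)
  · linarith [hzero_i h]
  · linarith [hzero_a h.1.symm]
  · linarith [hzero_b h.1.symm]

lemma IsExtremal.false_of_endpoint_pos (hΓ' : Γ'.IsExtremal)
    (hx : Γ'.IsNonnegUnitEigenvector x) (hpos : Γ'.PositiveOff s(a, b)) (hab : Γ'.G.Adj a b)
    (hneg : Γ'.sign a b = -1) (hia : i ≠ a) (hib : i ≠ b) (hxi : x i = 0) (hxb : 0 < x b) :
    False := by
  have hzero_i := eq_zero_of_adj hpos hx.mulVec_eq hx.nonneg hia hib hxi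
  have hnib : ¬Γ'.G.Adj i b := fun h => by linarith [hzero_i h]
  by_cases hadj_ia : Γ'.G.Adj i a
  · obtain ⟨p, hap, hpb, hxp⟩ := exists_adj_pos_of_endpoint hpos hx.mulVec_eq hx.nonneg hab hneg
      (by rw [hzero_i hadj_ia, mul_zero, zero_add]; exact hxb)
    by_cases hadj_pb : Γ'.G.Adj p b
    · exact hΓ'.false_of_replaceEdge hx hpos hab hneg hia hib hap.ne' hpb hxi hxp hap.symm
        hadj_pb hnib
    · exact hΓ'.false_of_addPosEdge hx hpos hia hib hap.ne' hpb hxi hxp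
        (fun h => by linarith [hzero_i h]) (fun h => hnib h.2) (fun h => hadj_pb h.1)
  · obtain ⟨q, hbq, hqa, hxq⟩ := exists_adj_pos_of_endpoint (by rwa [Sym2.eq_swap])
      hx.mulVec_eq hx.nonneg hab.symm (by rwa [Γ'.sign_symm]) <| by
        nlinarith [Γ'.one_le_lambda1 hab, hx.nonneg a]
    exact hΓ'.false_of_addPosEdge hx hpos hia hib hqa hbq.ne' hxi hxq
      (fun h => by linarith [hzero_i h]) (fun h => hnib h.2) (fun h => hadj_ia h.2)

end Extremal

end SignedGraph

theorem extremal_coordinates_positive_general (n : ℕ) (Γ' : SignedGraph n)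
    (hub : Γ'.Unbalanced) (hfree : Γ'.NegC4Free)
    (hmax : ∀ Γ : SignedGraph n, Γ.Unbalanced → Γ.NegC4Free → Γ.lambda1 ≤ Γ'.lambda1)
    (x : Fin n → ℝ) (hx : Γ'.adjMatrix.mulVec x = Γ'.lambda1 • x)
    (hnn : ∀ i, 0 ≤ x i) (hunit : ∑ i, x i ^ 2 = 1)
    (a b : Fin n) (hab : Γ'.G.Adj a b) (hneg : Γ'.sign a b = -1)
    (huniq : ∀ i j, Γ'.G.Adj i j → Γ'.sign i j = -1 → s(i, j) = s(a, b)) :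
    ∀ i, i ≠ a → i ≠ b → 0 < x i := by
  have hΓ' : Γ'.IsExtremal := ⟨hub, hfree, hmax⟩
  have hx' : Γ'.IsNonnegUnitEigenvector x := ⟨hx, hnn, hunit⟩
  have hpos : Γ'.PositiveOff s(a, b) := SignedGraph.positiveOff_of_forall_neg huniq
  intro i hia hib
  refine (hnn i).lt_of_ne' fun hxi => ?_
  rcases (hnn b).lt_or_eq with hxb | hxb
  · exact hΓ'.false_of_endpoint_pos hx' hpos hab hneg hia hib hxi hxb
  rcases (hnn a).lt_or_eq with hxa | hxa
  · exact hΓ'.false_of_endpoint_pos hx' (by rwa [Sym2.eq_swap]) hab.symm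
      (by rwa [Γ'.sign_symm]) hib hia hxi hxa
  · exact hΓ'.false_of_endpoints_eq_zero hx' hpos hab hneg hia hib hxi hxa.symm hxb.symm

theorem extremal_coordinates_positive (n : ℕ) (hn : 6 ≤ n) (Γ' : SignedGraph n)
    (hub : Γ'.Unbalanced) (hfree : Γ'.NegC4Free)
    (hmax : ∀ Γ : SignedGraph n, Γ.Unbalanced → Γ.NegC4Free → Γ.lambda1 ≤ Γ'.lambda1)
    (x : Fin n → ℝ) (hx : Γ'.adjMatrix.mulVec x = Γ'.lambda1 • x)
    (hnn : ∀ i, 0 ≤ x i) (hunit : ∑ i, x i ^ 2 = 1)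
    (a b : Fin n) (hab : Γ'.G.Adj a b) (hneg : Γ'.sign a b = -1)
    (huniq : ∀ i j, Γ'.G.Adj i j → Γ'.sign i j = -1 → s(i, j) = s(a, b)) :
    ∀ i, i ≠ a → i ≠ b → 0 < x i :=
  extremal_coordinates_positive_general n Γ' hub hfree hmax x hx hnn hunit a b hab hneg huniq
end
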